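/- arXiv:math/0003219 — 2 statements merged into one kernel-verified Lean document; each statement's English description precedes it below -/
import Mathlib

section
/- The bottom row map 𝔟 : SL_n(ℤ) → ℙ^{n-1}(ℤ/Nℤ) induces a bijection from the set of right cosets Γ₀(N)\SL_n(ℤ) onto ℙ^{n-1}(ℤ/Nℤ), given by Γ₀(N)γ ↦ 𝔟(γ); that is, 𝔟 is surjective, and 𝔟(γ) = 𝔟(γ′) if and only if γ′γ⁻¹ ∈ Γ₀(N). Moreover this bijection is equivariant for the right action of SL_n(ℤ): 𝔟(γδ) = 𝔟(γ)·δ for all γ, δ ∈ SL_n(ℤ). -/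
open Matrix

/-- `SL_n(ℤ)`, the special linear group of `n × n` integer matrices of determinant 1. -/
abbrev SL (n : ℕ) := Matrix.SpecialLinearGroup (Fin n) ℤ

/-- `Γ₀(N)`: the matrices in `SL_{n+1}(ℤ)` whose bottom row is congruent to
`(0, …, 0, *)` mod `N`, i.e. all bottom-row entries except the last are divisible by `N`. -/
def Gamma0 (N : ℕ) {n : ℕ} (γ : SL (n + 1)) : Prop :=
  ∀ j : Fin (n + 1), j ≠ Fin.last n → (N : ℤ) ∣ γ.1 (Fin.last n) j

/-- A row vector over `ℤ/Nℤ` is primitive if its coordinates generate the unit ideal. -/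
def IsPrimitive {m N : ℕ} (v : Fin m → ZMod N) : Prop :=
  Ideal.span (Set.range v) = ⊤

/-- Primitive row vectors over `ℤ/Nℤ`. -/
def PrimVec (m N : ℕ) := {v : Fin m → ZMod N // IsPrimitive v}

/-- Projective equivalence: two primitive vectors are equivalent iff they differ by
multiplication by a unit of `ℤ/Nℤ`. -/
instance projSetoid (m N : ℕ) : Setoid (PrimVec m N) where
  r v w := ∃ u : (ZMod N)ˣ, w.1 = fun i => (u : ZMod N) * v.1 i
  iseqv := by
    refine ⟨fun v => ⟨1, by funext i; simp⟩, ?_, ?_⟩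
    · rintro ⟨v, hv⟩ ⟨w, hw⟩ ⟨u, h⟩
      replace h : w = fun i => (u : ZMod N) * v i := h
      refine ⟨u⁻¹, ?_⟩
      funext i
      simp [h]
    · rintro ⟨v, hv⟩ ⟨w, hw⟩ ⟨x, hx⟩ ⟨u, h⟩ ⟨u', h'⟩
      replace h : w = fun i => (u : ZMod N) * v i := h
      replace h' : x = fun i => (u' : ZMod N) * w i := h'
      refine ⟨u' * u, ?_⟩
      funext i
      simp [h', h, mul_assoc]

/-- `ℙ^{m-1}(ℤ/Nℤ)`: primitive row vectors modulo multiplication by units of `ℤ/Nℤ`. -/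
def Proj (m N : ℕ) := Quotient (projSetoid m N)

/-- Reduction of an integral matrix mod `N`. -/
def modN {n N : ℕ} (γ : SL n) : Matrix (Fin n) (Fin n) (ZMod N) :=
  γ.1.map (Int.cast : ℤ → ZMod N)

lemma modN_det {n N : ℕ} (γ : SL n) : (modN (N := N) γ).det = 1 := by
  have := (Int.castRingHom (ZMod N)).map_det γ.1
  simpa [modN, γ.2] using this.symm

lemma primitive_vecMul {m N : ℕ} (v : Fin m → ZMod N) (hv : IsPrimitive v) (γ : SL m) :
    IsPrimitive (Matrix.vecMul v (modN γ)) := by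
  set A := modN (N := N) γ with hAdef
  have : Invertible A := Matrix.invertibleOfIsUnitDet A (by rw [modN_det]; exact isUnit_one)
  have hvw : v = Matrix.vecMul (Matrix.vecMul v A) (⅟A) := by
    rw [Matrix.vecMul_vecMul, mul_invOf_self, Matrix.vecMul_one]
  refine eq_top_iff.mpr ?_
  rw [_root_.IsPrimitive] at hv
  rw [← hv]
  refine Ideal.span_le.mpr ?_
  rintro x ⟨j, rfl⟩
  have hj : v j = ∑ i, Matrix.vecMul v A i * (⅟A) i j := congrFun hvw j
  rw [hj]
  exact Ideal.sum_mem _ fun i _ =>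
    Ideal.mul_mem_right _ _ (Ideal.subset_span ⟨i, rfl⟩)

lemma vecMul_const_mul {m : ℕ} {R : Type*} [CommRing R] (c : R) (v : Fin m → R)
    (A : Matrix (Fin m) (Fin m) R) :
    Matrix.vecMul (fun i => c * v i) A = fun j => c * Matrix.vecMul v A j := by
  funext j
  simp [Matrix.vecMul, dotProduct, Finset.mul_sum, mul_assoc]

/-- The map on primitive vectors underlying the right action of `SL_m(ℤ)`. -/
def ractFun {m N : ℕ} (γ : SL m) (v : PrimVec m N) : PrimVec m N :=
  ⟨Matrix.vecMul v.1 (modN γ), primitive_vecMul v.1 v.2 γ⟩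

lemma ractFun_compat {m N : ℕ} (γ : SL m) :
    ∀ v w : PrimVec m N, v ≈ w → ractFun γ v ≈ ractFun γ w := by
  rintro ⟨v, hv⟩ ⟨w, hw⟩ ⟨u, h⟩
  replace h : w = fun i => (u : ZMod N) * v i := h
  refine ⟨u, ?_⟩
  show Matrix.vecMul w (modN γ) = _
  rw [h, vecMul_const_mul]
  rfl

/-- The right action of `SL_m(ℤ)` on `ℙ^{m-1}(ℤ/Nℤ)`: reduce the matrix mod `N` and
multiply the row vector on the right. -/
def ract {m N : ℕ} (x : Proj m N) (γ : SL m) : Proj m N :=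
  Quotient.map (ractFun γ) (ractFun_compat γ) x

lemma brow_primitive {n N : ℕ} (γ : SL (n + 1)) :
    IsPrimitive (fun j => ((γ.1 (Fin.last n) j : ℤ) : ZMod N)) := by
  rw [_root_.IsPrimitive, Ideal.eq_top_iff_one]
  have hdet : γ.1.det = 1 := γ.2
  have hexp := Matrix.det_succ_row γ.1 (Fin.last n)
  have key : ((γ.1.det : ℤ) : ZMod N) ∈
      Ideal.span (Set.range fun j => ((γ.1 (Fin.last n) j : ℤ) : ZMod N)) := by
    rw [hexp]
    push_cast
    refine Ideal.sum_mem _ fun j _ => ?_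
    exact Ideal.mul_mem_right _ _ (Ideal.mul_mem_left _ _ (Ideal.subset_span ⟨j, rfl⟩))
  rw [hdet] at key
  simpa using key

/-- The bottom row map `𝔟 : SL_{n+1}(ℤ) → ℙ^n(ℤ/Nℤ)`: the class of the bottom row
of the matrix, reduced mod `N`. -/
def brow {n : ℕ} (N : ℕ) (γ : SL (n + 1)) : Proj (n + 1) N :=
  ⟦⟨fun j => ((γ.1 (Fin.last n) j : ℤ) : ZMod N), brow_primitive γ⟩⟧

/-!
Bottom rows multiply as row vectors, `(γδ)ₙ = γₙ δ`, so `𝔟(γ) = 𝔟(1)·γ` and the fibres of `𝔟`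
are the right cosets of the stabiliser of `𝔟(1) = [0 : ⋯ : 0 : 1]`, which is `Γ₀(N)`.

For surjectivity we use that the finite ring `ℤ/Nℤ` has stable range one: if `Σ cᵢ vᵢ = 1` and
`a = vₙ` satisfies `a ^ (i + p) = a ^ i` with `p ≠ 0`, then `a + (1 - aᵖ) Σ_{i<n} cᵢ vᵢ` is a unit.
An upper unipotent integral matrix therefore moves a primitive `v` to a vector `w` whose last
coordinate is a unit `u`, and `u⁻¹ w` is the bottom row of a lower unipotent integral matrix.
-/

theorem exists_pow_add_eq_pow_of_finite {M : Type*} [Monoid M] [Finite M] (a : M) :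
    ∃ i p : ℕ, p ≠ 0 ∧ a ^ (i + p) = a ^ i := by
  obtain ⟨i, j, hij, h⟩ := Finite.exists_ne_map_eq_of_infinite (a ^ · : ℕ → M)
  rcases hij.lt_or_gt with hlt | hlt
  · exact ⟨i, j - i, by omega, by rw [Nat.add_sub_cancel' hlt.le]; exact h.symm⟩
  · exact ⟨j, i - j, by omega, by rw [Nat.add_sub_cancel' hlt.le]; exact h⟩

/-- Modulo a maximal ideal the element is `1` if `a` vanishes there, and `a` otherwise, since then
`a ^ p = 1` in the residue field. -/
theorem isUnit_add_one_sub_pow_mul_one_sub {R : Type*} [CommRing R] {a : R} {i p : ℕ}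
    (hp : p ≠ 0) (h : a ^ (i + p) = a ^ i) (c : R) :
    IsUnit (a + (1 - a ^ p) * (1 - c * a)) := by
  by_contra hu
  obtain ⟨m, hm, hmem⟩ := exists_max_ideal_of_mem_nonunits hu
  let _ := Ideal.Quotient.field m
  have hzero := (Ideal.Quotient.eq_zero_iff_mem (I := m)).mpr hmem
  set π := Ideal.Quotient.mk m
  by_cases ha : π a = 0
  · simp [ha, zero_pow hp] at hzero
  · have hpow : π a ^ p = 1 := by
      have := congrArg π h
      rw [map_pow, pow_add] at this
      exact (mul_eq_left₀ (pow_ne_zero i ha)).mp this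
    simp [hpow, ha] at hzero

theorem exists_isUnit_snoc_one_dotProduct {R : Type*} [CommRing R] [Finite R] {n : ℕ}
    {v : Fin (n + 1) → R} (hv : Ideal.span (Set.range v) = ⊤) :
    ∃ x : Fin n → R, IsUnit (Fin.snoc x 1 ⬝ᵥ v) := by
  obtain ⟨c, hc⟩ := Ideal.mem_span_range_iff_exists_fun.mp (hv ▸ Submodule.mem_top : (1 : R) ∈ _)
  set a := v (Fin.last n)
  obtain ⟨i, p, hp, hip⟩ := exists_pow_add_eq_pow_of_finite a
  refine ⟨fun j => (1 - a ^ p) * c j.castSucc, ?_⟩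
  convert isUnit_add_one_sub_pow_mul_one_sub hp hip (c (Fin.last n)) using 1
  rw [Fin.sum_univ_castSucc] at hc
  simp only [dotProduct, Fin.sum_univ_castSucc, Fin.snoc_castSucc, Fin.snoc_last, mul_assoc,
    ← Finset.mul_sum]
  linear_combination (1 - a ^ p) * hc

namespace Matrix.SpecialLinearGroup

variable {R : Type*} [CommRing R] {n : ℕ}

def lowerUnipotent (x : Fin n → R) : SpecialLinearGroup (Fin (n + 1)) R :=
  ⟨(1 : Matrix (Fin (n + 1)) (Fin (n + 1)) R).updateRow (Fin.last n) (Fin.snoc x 1), by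
    rw [det_of_isLowerTriangular]
    · refine Finset.prod_eq_one fun i _ => ?_
      rcases eq_or_ne i (Fin.last n) with rfl | hi
      · simp
      · simp [hi]
    · intro i j (hij : i < j)
      have hi : i ≠ Fin.last n := (hij.trans_le (Fin.le_last j)).ne
      simp [updateRow_ne hi, one_apply_ne hij.ne]⟩

lemma lowerUnipotent_last (x : Fin n → R) :
    (lowerUnipotent x).1 (Fin.last n) = Fin.snoc x 1 := by
  simp [lowerUnipotent]

lemma lowerUnipotent_mulVec (x : Fin n → R) (v : Fin (n + 1) → R) :
    (lowerUnipotent x).1 *ᵥ v = Function.update v (Fin.last n) (Fin.snoc x 1 ⬝ᵥ v) := by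
  simp [lowerUnipotent, updateRow_mulVec]

end Matrix.SpecialLinearGroup

section ReductionModN

variable {n N : ℕ}

lemma modN_mul (γ δ : SL n) : modN (N := N) (γ * δ) = modN γ * modN δ :=
  map_mul (Int.castRingHom (ZMod N)).mapMatrix γ.1 δ.1

lemma modN_one : modN (N := N) (1 : SL n) = 1 :=
  map_one (Int.castRingHom (ZMod N)).mapMatrix

lemma modN_transpose (γ : SL n) : modN (N := N) γ.transpose = (modN γ)ᵀ :=
  transpose_map

lemma exists_modN_eq_lowerUnipotent (x : Fin n → ZMod N) :
    ∃ γ : SL (n + 1), modN γ = (SpecialLinearGroup.lowerUnipotent x).1 := by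
  refine ⟨SpecialLinearGroup.lowerUnipotent fun i => (x i).cast, ?_⟩
  ext i j
  rcases eq_or_ne i (Fin.last n) with rfl | hi
  · refine j.lastCases ?_ fun j => ?_ <;> simp [modN, SpecialLinearGroup.lowerUnipotent]
  · simp [modN, SpecialLinearGroup.lowerUnipotent, updateRow_ne hi, one_apply]

end ReductionModN

section RightAction

variable {m N : ℕ}

lemma ract_mk (v : PrimVec m N) (γ : SL m) : ract ⟦v⟧ γ = ⟦ractFun γ v⟧ := rfl

lemma ract_ract (x : Proj m N) (γ δ : SL m) : ract (ract x γ) δ = ract x (γ * δ) := by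
  induction x using Quotient.inductionOn with
  | h v =>
    rw [ract_mk, ract_mk, ract_mk]
    exact congrArg _ (Subtype.ext (by simp [ractFun, modN_mul, vecMul_vecMul]))

lemma ract_one (x : Proj m N) : ract x 1 = x := by
  induction x using Quotient.inductionOn with
  | h v =>
    rw [ract_mk]
    exact congrArg _ (Subtype.ext (by simp [ractFun, modN_one]))

lemma ract_inj {x y : Proj m N} (γ : SL m) : ract x γ = ract y γ ↔ x = y := by
  refine ⟨fun h => ?_, congrArg (ract · γ)⟩
  simpa [ract_ract, ract_one] using congrArg (ract · γ⁻¹) h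

end RightAction

section BottomRow

variable {n N : ℕ}

lemma brow_mul (γ δ : SL (n + 1)) : brow N (γ * δ) = ract (brow N γ) δ := by
  refine congrArg (Quotient.mk _) (Subtype.ext ?_)
  show modN (γ * δ) (Fin.last n) = modN γ (Fin.last n) ᵥ* modN δ
  rw [modN_mul]
  rfl

lemma gamma0_iff (δ : SL (n + 1)) :
    Gamma0 N δ ↔ ∀ j ≠ Fin.last n, ((δ.1 (Fin.last n) j : ℤ) : ZMod N) = 0 := by
  simp only [Gamma0, ZMod.intCast_zmod_eq_zero_iff_dvd]

lemma brow_one_eq_brow_iff (δ : SL (n + 1)) : brow N 1 = brow N δ ↔ Gamma0 N δ := by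
  rw [gamma0_iff]
  constructor
  · intro h j hj
    obtain ⟨u, hu⟩ := Quotient.exact h
    simpa [one_apply_ne' hj] using congrFun hu j
  · intro h
    set c : ZMod N := ((δ.1 (Fin.last n) (Fin.last n) : ℤ) : ZMod N)
    have hc : IsUnit c := by
      refine Ideal.span_singleton_eq_top.mp (top_le_iff.mp ((brow_primitive δ).symm.trans_le ?_))
      refine Ideal.span_le.mpr ?_
      rintro _ ⟨j, rfl⟩
      rcases eq_or_ne j (Fin.last n) with rfl | hj
      · exact Ideal.subset_span rfl
      · simp [h j hj]
    refine Quotient.sound ⟨hc.unit, funext fun j => ?_⟩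
    rcases eq_or_ne j (Fin.last n) with rfl | hj
    · simp [c]
    · simp [one_apply_ne' hj, h j hj]

lemma brow_eq_brow_iff (γ γ' : SL (n + 1)) :
    brow N γ = brow N γ' ↔ Gamma0 N (γ' * γ⁻¹) := by
  have h : brow N γ = ract (brow N 1) γ := by rw [← brow_mul, one_mul]
  have h' : brow N γ' = ract (brow N (γ' * γ⁻¹)) γ := by rw [← brow_mul, inv_mul_cancel_right]
  rw [h, h', ract_inj, brow_one_eq_brow_iff]

theorem brow_surjective [NeZero N] : Function.Surjective (brow (n := n) N) := by
  intro y
  obtain ⟨p, hp⟩ := Quotient.exists_rep y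
  obtain ⟨x, hu⟩ := exists_isUnit_snoc_one_dotProduct p.2
  set u := hu.unit
  set w := Function.update p.1 (Fin.last n) (Fin.snoc x 1 ⬝ᵥ p.1)
  obtain ⟨T, hT⟩ := exists_modN_eq_lowerUnipotent x
  obtain ⟨L, hL⟩ := exists_modN_eq_lowerUnipotent (Fin.init ((↑u⁻¹ : ZMod N) • w))
  have hTp : (ractFun T.transpose p).1 = w := by
    simp [ractFun, modN_transpose, vecMul_transpose, hT, SpecialLinearGroup.lowerUnipotent_mulVec,
      w]
  have hL_last : modN L (Fin.last n) = (↑u⁻¹ : ZMod N) • w := by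
    rw [hL, SpecialLinearGroup.lowerUnipotent_last]
    conv_rhs => rw [← Fin.snoc_init_self ((↑u⁻¹ : ZMod N) • w)]
    simp [w, u]
  have hLT : brow N L = ract y T.transpose := by
    rw [← hp]
    refine Quotient.sound ⟨u, ?_⟩
    change (ractFun T.transpose p).1 = fun j => (u : ZMod N) * modN L (Fin.last n) j
    simp [hTp, hL_last]
  exact ⟨L * T.transpose⁻¹, by rw [brow_mul, hLT, ract_ract, mul_inv_cancel, ract_one]⟩

end BottomRow

theorem bottom_row_bijection_general (n N : ℕ) (hN : 1 ≤ N) :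
    Function.Surjective (brow (n := n) N) ∧
    (∀ γ γ' : SL (n + 1), brow N γ = brow N γ' ↔ Gamma0 N (γ' * γ⁻¹)) ∧
    (∀ γ δ : SL (n + 1), brow N (γ * δ) = ract (brow N γ) δ) :=
  have : NeZero N := ⟨by omega⟩
  ⟨brow_surjective, brow_eq_brow_iff, brow_mul⟩

/-- The bottom row map `𝔟 : SL_{n+1}(ℤ) → ℙ^n(ℤ/Nℤ)` induces a bijection
`Γ₀(N)\SL_{n+1}(ℤ) ≃ ℙ^n(ℤ/Nℤ)`: it is surjective, and `𝔟(γ) = 𝔟(γ′)` iff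
`γ′γ⁻¹ ∈ Γ₀(N)`.  Moreover it is equivariant for the right action of `SL_{n+1}(ℤ)`. -/
theorem bottom_row_bijection (n N : ℕ) (hn : 1 ≤ n) (hN : 1 ≤ N) :
    Function.Surjective (brow (n := n) N) ∧
    (∀ γ γ' : SL (n + 1), brow N γ = brow N γ' ↔ Gamma0 N (γ' * γ⁻¹)) ∧
    (∀ γ δ : SL (n + 1), brow N (γ * δ) = ract (brow N γ) δ) :=
  bottom_row_bijection_general n N hN
end

section
/- Every 4×5 integer matrix M whose columns are primitive vectors in ℤ⁴, no two of which are equal up to sign, and for which the maximum of the absolute values of the determinants of the 4×4 submatrices (obtained by choosing 4 of the 5 columns) equals 1, can be transformed into exactly one of the three matrices [I₄ | e₁+e₂+e₃+e₄], [I₄ | e₁+e₂+e₃], [I₄ | e₁+e₂] by multiplying M on the left by a matrix in GL₄(ℤ), permuting its columns, and changing the signs of some of its columns. (That is, modulo the action of GL₄(ℤ), there are exactly three classes of reduced basis 1-sharblies for n = 4.) -/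
/-!
Pick a column `j₀` whose complementary minor `A` is `±1`. Multiplying by `A⁻¹` and moving `j₀`
to the end gives `[I | v]`. The maximal minors of `[I | v]` are `1` and `±vᵢ`, and the action of
`GL`, column permutations and signs only permutes maximal minors up to units, so reducedness
forces `vᵢ ∈ {0, ±1}`; primitivity and distinctness of the columns rule out `v = 0` and
`v = ±eₐ`. A signed permutation of the rows, undone on the first columns, then turns `v` into
`e₁ + ⋯ + eₘ` with `m ≥ 2`. The same invariance shows that the number `n - m` of vanishing
maximal minors separates the classes.
-/

open Matrix Finset Equiv

section Action

variable {R : Type*} [CommRing R] {m ι : Type*} [Fintype m] [DecidableEq m]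

def SharblyEquiv (M N : Matrix m ι R) : Prop :=
  ∃ (g : GL m R) (π : Perm ι) (ε : ι → Rˣ),
    N = of fun i j => (ε j : R) * ((g : Matrix m m R) * M) i (π j)

theorem sharblyEquiv_of_isUnit_det {M : Matrix m ι R} {g : Matrix m m R} (hg : IsUnit g.det)
    (π : Perm ι) (ε : ι → Rˣ) :
    SharblyEquiv M (of fun i j => (ε j : R) * (g * M) i (π j)) :=
  ⟨nonsingInvUnit g hg, π, ε, rfl⟩

theorem SharblyEquiv.trans {M N P : Matrix m ι R} (hMN : SharblyEquiv M N)
    (hNP : SharblyEquiv N P) : SharblyEquiv M P := by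
  obtain ⟨g, π, ε, rfl⟩ := hMN
  obtain ⟨g', π', ε', rfl⟩ := hNP
  refine ⟨g' * g, π'.trans π, fun j => ε' j * ε (π' j), ?_⟩
  rw [Units.val_mul, Matrix.mul_assoc]
  ext i j
  simp only [of_apply, mul_apply (M := (g' : Matrix m m R)), Finset.mul_sum, Equiv.trans_apply,
    Units.val_mul]
  exact Finset.sum_congr rfl fun _ _ => by ring

end Action

theorem Fin.exists_perm_eq_succAbove {n : ℕ} {τ : Fin n → Fin (n + 1)}
    (hτ : Function.Injective τ) {j : Fin (n + 1)} (hj : ∀ l, τ l ≠ j) :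
    ∃ ρ : Perm (Fin n), ∀ l, τ l = j.succAbove (ρ l) := by
  choose ρ hρ using fun l => Fin.exists_succAbove_eq (hj l)
  have hρinj : Function.Injective ρ := fun a b hab => hτ (by rw [← hρ a, ← hρ b, hab])
  exact ⟨.ofBijective ρ hρinj.bijective_of_finite, fun l => (hρ l).symm⟩

def extendPerm {n : ℕ} (j : Fin (n + 1)) (σ : Perm (Fin n)) : Perm (Fin (n + 1)) :=
  (finSuccEquiv' (Fin.last n)).trans ((optionCongr σ).trans (finSuccEquiv' j).symm)

@[simp]
theorem extendPerm_last {n : ℕ} (j : Fin (n + 1)) (σ : Perm (Fin n)) :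
    extendPerm j σ (Fin.last n) = j := by
  simp [extendPerm]

@[simp]
theorem extendPerm_castSucc {n : ℕ} (j : Fin (n + 1)) (σ : Perm (Fin n)) (l : Fin n) :
    extendPerm j σ l.castSucc = j.succAbove (σ l) := by
  simp [extendPerm, finSuccEquiv'_last_apply_castSucc]

section Minors

variable {R : Type*} [CommRing R] {n : ℕ}

theorem SharblyEquiv.exists_perm_associated_det {M N : Matrix (Fin n) (Fin (n + 1)) R}
    (h : SharblyEquiv M N) : ∃ π : Perm (Fin (n + 1)), ∀ j,
      Associated (N.submatrix id j.succAbove).det (M.submatrix id (π j).succAbove).det := by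
  obtain ⟨g, π, ε, rfl⟩ := h
  refine ⟨π, fun j => ?_⟩
  obtain ⟨ρ, hρ⟩ := Fin.exists_perm_eq_succAbove (τ := π ∘ j.succAbove)
    (π.injective.comp Fin.succAbove_right_injective)
    (fun l h => Fin.succAbove_ne j l (π.injective h))
  set G : Matrix (Fin n) (Fin n) R := ↑g
  have hminor : (of fun i j => (ε j : R) * (G * M) i (π j)).submatrix id j.succAbove =
      of fun i l =>
        (ε (j.succAbove l) : R) * (G * M.submatrix id (π j).succAbove).submatrix id ρ i l := by
    ext i l
    simp [← hρ, mul_apply]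
  rw [hminor, det_mul_row, det_permute', det_mul, ← mul_assoc, ← mul_assoc]
  refine associated_unit_mul_left _ _ ?_
  refine .mul (.mul ?_ ((Perm.sign ρ).isUnit.map (Int.castRingHom R))) (isUnits_det_units g)
  simpa only [Units.coe_prod] using (∏ l, ε (j.succAbove l)).isUnit

def numVanishingMinors [DecidableEq R] (M : Matrix (Fin n) (Fin (n + 1)) R) : ℕ :=
  #{j : Fin (n + 1) | (M.submatrix id j.succAbove).det = 0}

theorem SharblyEquiv.numVanishingMinors_eq [DecidableEq R]
    {M N : Matrix (Fin n) (Fin (n + 1)) R} (h : SharblyEquiv M N) :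
    numVanishingMinors N = numVanishingMinors M := by
  obtain ⟨π, hπ⟩ := h.exists_perm_associated_det
  exact card_equiv π fun j => by simp [(hπ j).eq_zero_iff]

theorem SharblyEquiv.natAbs_det_le {M N : Matrix (Fin n) (Fin (n + 1)) ℤ}
    (h : SharblyEquiv M N) (j : Fin (n + 1)) :
    (N.submatrix id j.succAbove).det.natAbs ≤
      univ.sup fun j : Fin (n + 1) => (M.submatrix id j.succAbove).det.natAbs := by
  obtain ⟨π, hπ⟩ := h.exists_perm_associated_det
  rw [Int.associated_iff_natAbs.mp (hπ j)]
  exact le_sup (f := fun j : Fin (n + 1) => (M.submatrix id j.succAbove).det.natAbs)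
    (mem_univ (π j))

end Minors

section AugmentedIdentity

variable {R : Type*} [CommRing R] {n : ℕ}

/-- `[I | v]`, written with `ℕ`-valued index tests so that the matrices in the main theorem are
literally `augmentedIdentity (firstOnes (4 - k))`. -/
def augmentedIdentity (v : Fin n → R) : Matrix (Fin n) (Fin (n + 1)) R :=
  of fun i j => if (j : ℕ) = n then v i else if (i : ℕ) = j then 1 else 0

def firstOnes (m : ℕ) : Fin n → R := fun i => if (i : ℕ) < m then 1 else 0

@[simp]
theorem augmentedIdentity_last (v : Fin n → R) (i : Fin n) :
    augmentedIdentity v i (Fin.last n) = v i := by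
  simp [augmentedIdentity]

@[simp]
theorem augmentedIdentity_castSucc (v : Fin n → R) (i l : Fin n) :
    augmentedIdentity v i l.castSucc = (1 : Matrix (Fin n) (Fin n) R) i l := by
  simp [augmentedIdentity, one_apply, Fin.ext_iff, l.isLt.ne]

theorem det_augmentedIdentity_last (v : Fin n → R) :
    ((augmentedIdentity v).submatrix id (Fin.last n).succAbove).det = 1 := by
  convert det_one (R := R) (n := Fin n)
  ext i l
  simp

theorem associated_det_augmentedIdentity_castSucc (v : Fin n → R) (i : Fin n) :
    Associated ((augmentedIdentity v).submatrix id i.castSucc.succAbove).det (v i) := by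
  obtain ⟨ρ, hρ⟩ := Fin.exists_perm_eq_succAbove (j := i.castSucc)
    (τ := Equiv.swap i.castSucc (Fin.last n) ∘ Fin.castSucc)
    ((Equiv.swap _ _).injective.comp (Fin.castSucc_injective n))
    (fun l h => Fin.castSucc_ne_last l (by simp [swap_apply_eq_iff] at h))
  have hρ' : ∀ l, i.castSucc.succAbove (ρ l) = Equiv.swap i.castSucc (Fin.last n) l.castSucc :=
    fun l => (hρ l).symm
  have hupdate : ((augmentedIdentity v).submatrix id i.castSucc.succAbove).submatrix id ρ =
      (1 : Matrix (Fin n) (Fin n) R).updateCol i v := by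
    ext k l
    simp only [submatrix_apply, id_eq, hρ']
    by_cases hl : l = i
    · simp [hl]
    · rw [swap_apply_of_ne_of_ne (by simpa using hl) (Fin.castSucc_ne_last l)]
      simp [hl]
  have hdet :
      v i = Perm.sign ρ * ((augmentedIdentity v).submatrix id i.castSucc.succAbove).det := by
    rw [← det_permute', hupdate, ← cramer_apply, cramer_one, Module.End.one_apply]
  rw [hdet]
  exact (associated_unit_mul_left _ _ ((Perm.sign ρ).isUnit.map (Int.castRingHom R))).symm

theorem numVanishingMinors_augmentedIdentity [DecidableEq R] [Nontrivial R] (v : Fin n → R) :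
    numVanishingMinors (augmentedIdentity v) = #{i | v i = 0} := by
  simp only [numVanishingMinors, card_filter, Fin.sum_univ_castSucc, det_augmentedIdentity_last,
    (associated_det_augmentedIdentity_castSucc v _).eq_zero_iff]
  simp

theorem numVanishingMinors_augmentedIdentity_firstOnes [DecidableEq R] [Nontrivial R] (m : ℕ) :
    numVanishingMinors (augmentedIdentity (firstOnes m : Fin n → R)) = n - m := by
  rw [numVanishingMinors_augmentedIdentity]
  have := card_filter_add_card_filter_not (s := univ) fun i : Fin n => (i : ℕ) < m
  simp only [Fin.card_filter_val_lt, card_univ, Fintype.card_fin] at this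
  simp only [firstOnes, ite_eq_right_iff, one_ne_zero, imp_false]
  omega

theorem SharblyEquiv.numVanishingMinors_eq_sub [DecidableEq R] [Nontrivial R]
    {M : Matrix (Fin n) (Fin (n + 1)) R} {m : ℕ}
    (h : SharblyEquiv M (augmentedIdentity (firstOnes m))) : numVanishingMinors M = n - m := by
  rw [← h.numVanishingMinors_eq, numVanishingMinors_augmentedIdentity_firstOnes]

end AugmentedIdentity

section Normalization

variable {R : Type*} [CommRing R] {n : ℕ}

theorem sharblyEquiv_augmentedIdentity_of_isUnit {M : Matrix (Fin n) (Fin (n + 1)) R}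
    {j₀ : Fin (n + 1)} (hA : IsUnit (M.submatrix id j₀.succAbove).det) :
    SharblyEquiv M (augmentedIdentity ((M.submatrix id j₀.succAbove)⁻¹ *ᵥ Mᵀ j₀)) := by
  set A := M.submatrix id j₀.succAbove
  have hcols : (A⁻¹ * M).submatrix id j₀.succAbove = 1 := by
    rw [submatrix_mul _ _ id id _ Function.bijective_id, submatrix_id_id]
    exact nonsing_inv_mul A hA
  convert sharblyEquiv_of_isUnit_det (isUnit_nonsing_inv_det A hA) (extendPerm j₀ 1) 1 using 1
  ext i j
  induction j using Fin.lastCases with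
  | last => simp [mulVec, dotProduct, mul_apply]
  | cast l => simp [← hcols]

theorem augmentedIdentity_sharblyEquiv_comp (v : Fin n → R) (σ : Perm (Fin n)) :
    SharblyEquiv (augmentedIdentity v) (augmentedIdentity (v ∘ σ)) := by
  convert sharblyEquiv_of_isUnit_det (M := augmentedIdentity v) (g := σ.permMatrix R)
    (by simpa using (Perm.sign σ).isUnit.map (Int.castRingHom R)) (extendPerm (Fin.last n) σ) 1
    using 1
  ext i j
  induction j using Fin.lastCases with
  | last => simp [PEquiv.toMatrix_toPEquiv_mul]
  | cast l => simp [PEquiv.toMatrix_toPEquiv_mul, one_apply]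

theorem augmentedIdentity_sharblyEquiv_unit_mul (v : Fin n → R) (d : Fin n → Rˣ) :
    SharblyEquiv (augmentedIdentity v) (augmentedIdentity fun i => d i * v i) := by
  convert sharblyEquiv_of_isUnit_det (M := augmentedIdentity v) (g := diagonal fun i => (d i : R))
    (by simp) 1 (Fin.snoc (fun l => (d l)⁻¹) 1) using 1
  ext i j
  induction j using Fin.lastCases with
  | last => simp
  | cast l => by_cases h : i = l <;> simp [one_apply, h]

theorem exists_perm_ne_zero_iff_lt {α : Type*} [Zero α] [DecidableEq α] (v : Fin n → α) :
    ∃ σ : Perm (Fin n), ∀ i, v (σ i) ≠ 0 ↔ (i : ℕ) < #{i | v i ≠ 0} := by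
  have hcard : Fintype.card {i : Fin n // (i : ℕ) < #{i | v i ≠ 0}} =
      Fintype.card {i // v i ≠ 0} := by
    have := card_le_univ {i | v i ≠ 0}
    rw [Fintype.card_subtype, Fintype.card_subtype, Fin.card_filter_val_lt]
    simp only [Fintype.card_fin] at this
    omega
  obtain e := Fintype.equivOfCardEq hcard
  refine ⟨e.extendSubtype, fun i => ⟨fun h => ?_, e.extendSubtype_mem i⟩⟩
  by_contra hi
  exact e.extendSubtype_not_mem i hi h

end Normalization

section Integer

variable {n : ℕ}

theorem augmentedIdentity_sharblyEquiv_firstOnes {v : Fin n → ℤ} (hv : ∀ i, (v i).natAbs ≤ 1) :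
    SharblyEquiv (augmentedIdentity v) (augmentedIdentity (firstOnes #{i | v i ≠ 0})) := by
  obtain ⟨σ, hσ⟩ := exists_perm_ne_zero_iff_lt v
  choose d hd using fun i => Int.associated_natAbs (v (σ i))
  have hnormal : (fun i => (d i : ℤ) * (v ∘ σ) i) = firstOnes #{i | v i ≠ 0} := by
    funext i
    have := hv (σ i)
    rw [Function.comp_apply, mul_comm, hd, firstOnes]
    by_cases hi : (i : ℕ) < #{i | v i ≠ 0}
    · have := (hσ i).mpr hi
      rw [if_pos hi]
      omega
    · have := not_not.mp (mt (hσ i).mp hi)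
      rw [if_neg hi]
      omega
  rw [← hnormal]
  exact (augmentedIdentity_sharblyEquiv_comp v σ).trans
    (augmentedIdentity_sharblyEquiv_unit_mul _ d)

theorem eq_zero_or_eq_single_of_card_ne_zero_le_one {ι : Type*} [Fintype ι] [DecidableEq ι]
    {v : ι → ℤ} (hv : ∀ i, (v i).natAbs ≤ 1) (h : #{i | v i ≠ 0} ≤ 1) :
    v = 0 ∨ ∃ a, v = Pi.single a 1 ∨ v = -Pi.single a 1 := by
  by_cases hz : v = 0
  · exact .inl hz
  obtain ⟨a, ha⟩ : ∃ a, v a ≠ 0 := Function.ne_iff.mp hz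
  have hsingle : v = Pi.single a (v a) := by
    funext i
    by_cases hi : i = a
    · simp [hi]
    · by_contra hvi
      exact hi (card_le_one.mp h i (by simpa [hi] using hvi) a (by simpa using ha))
  have := hv a
  rcases (by omega : v a = 1 ∨ v a = -1) with h1 | h1
  · exact .inr ⟨a, .inl (h1 ▸ hsingle)⟩
  · exact .inr ⟨a, .inr (by rw [hsingle, h1, Pi.single_neg])⟩

theorem exists_sharblyEquiv_augmentedIdentity_firstOnes {M : Matrix (Fin n) (Fin (n + 1)) ℤ}
    (hzero : ∀ j, Mᵀ j ≠ 0) (hdist : ∀ j j', j ≠ j' → Mᵀ j ≠ Mᵀ j' ∧ Mᵀ j ≠ -Mᵀ j')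
    (hred : univ.sup (fun j : Fin (n + 1) => (M.submatrix id j.succAbove).det.natAbs) = 1) :
    ∃ m, 2 ≤ m ∧ m ≤ n ∧ SharblyEquiv M (augmentedIdentity (firstOnes m)) := by
  obtain ⟨j₀, -, hj₀⟩ := exists_mem_eq_sup univ univ_nonempty
    fun j : Fin (n + 1) => (M.submatrix id j.succAbove).det.natAbs
  set A := M.submatrix id j₀.succAbove
  have hA : IsUnit A.det := Int.isUnit_iff_natAbs_eq.mpr (hj₀.symm.trans hred)
  set v := A⁻¹ *ᵥ Mᵀ j₀
  have hMv : SharblyEquiv M (augmentedIdentity v) := sharblyEquiv_augmentedIdentity_of_isUnit hA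
  have hv : ∀ i, (v i).natAbs ≤ 1 := fun i => by
    rw [← hred, ← Int.associated_iff_natAbs.mp (associated_det_augmentedIdentity_castSucc v i)]
    exact hMv.natAbs_det_le _
  have hcol : Mᵀ j₀ = A *ᵥ v := by rw [mulVec_mulVec, mul_nonsing_inv A hA, one_mulVec]
  have htwo : 2 ≤ #{i | v i ≠ 0} := by
    by_contra! hlt
    rcases eq_zero_or_eq_single_of_card_ne_zero_le_one hv (by omega) with hv0 | ⟨a, hva | hva⟩
    · exact hzero j₀ (by rw [hcol, hv0, mulVec_zero])
    · exact (hdist j₀ _ (Fin.succAbove_ne j₀ a).symm).1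
        (by rw [hcol, hva, mulVec_single_one]; rfl)
    · exact (hdist j₀ _ (Fin.succAbove_ne j₀ a).symm).2
        (by rw [hcol, hva, mulVec_neg, mulVec_single_one]; rfl)
  exact ⟨_, htwo, (card_le_univ _).trans (by simp),
    hMv.trans (augmentedIdentity_sharblyEquiv_firstOnes hv)⟩

end Integer

/-- Every `4 × 5` integer matrix with primitive columns, no two of which are equal up
to sign, whose `4 × 4` column-minors have maximal absolute determinant `1`, can be
transformed into exactly one of the three standard matrices
`[I₄ | e₁+e₂+e₃+e₄]`, `[I₄ | e₁+e₂+e₃]`, `[I₄ | e₁+e₂]`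
by left multiplication by an element of `GL₄(ℤ)`, a permutation of the columns, and
sign changes of the columns: modulo `GL₄(ℤ)` there are exactly three classes of
reduced basis 1-sharblies for `n = 4`. -/
theorem three_classes_of_reduced_one_sharblies (M : Matrix (Fin 4) (Fin 5) ℤ)
    (hprim : ∀ j : Fin 5, Finset.univ.gcd (fun i => M i j) = 1)
    (hdist : ∀ j j' : Fin 5, j ≠ j' →
        (fun i => M i j) ≠ (fun i => M i j') ∧ (fun i => M i j) ≠ (fun i => -M i j'))
    (hred : (Finset.univ.sup fun j : Fin 5 =>
        (M.submatrix id j.succAbove).det.natAbs) = 1) :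
    ∃! k : Fin 3, ∃ (g : GL (Fin 4) ℤ) (π : Equiv.Perm (Fin 5)) (ε : Fin 5 → ℤˣ),
      (fun (i : Fin 4) (j : Fin 5) =>
          if (j : ℕ) = 4 then (if (i : ℕ) < 4 - (k : ℕ) then (1 : ℤ) else 0)
          else (if (i : ℕ) = (j : ℕ) then 1 else 0))
        = fun i j => (ε j : ℤ) * ((g : Matrix (Fin 4) (Fin 4) ℤ) * M) i (π j) := by
  suffices ∃! k : Fin 3, SharblyEquiv M (augmentedIdentity (firstOnes (4 - k))) from this
  have hzero : ∀ j, Mᵀ j ≠ 0 := fun j h =>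
    zero_ne_one ((Finset.gcd_eq_zero_iff.mpr fun i _ => congrFun h i).symm.trans (hprim j))
  obtain ⟨m, hm2, hm4, hM⟩ := exists_sharblyEquiv_augmentedIdentity_firstOnes hzero hdist hred
  refine ⟨⟨4 - m, by omega⟩, ?_, fun k hk => Fin.ext ?_⟩
  · show SharblyEquiv M (augmentedIdentity (firstOnes (4 - (4 - m))))
    rwa [Nat.sub_sub_self hm4]
  · have hcount := hk.numVanishingMinors_eq_sub.symm.trans hM.numVanishingMinors_eq_sub
    show (k : ℕ) = 4 - m
    omega
end
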